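/- Let A be an n×n real symmetric positive definite matrix with smallest eigenvalue λ₁ > 0, let b ∈ ℝⁿ, and set v = A⁻¹ b. Suppose the entries of v are pairwise distinct with gap g = min_{i ≠ j} |v_i − v_j| > 0. Let E be an n×n real symmetric matrix and f ∈ ℝⁿ with ‖E‖₂ ≤ λ₁/2 and (2/λ₁²) ‖E‖₂ ‖b‖₂ + (2/λ₁) ‖f‖₂ < g/2, and set w = (A+E)⁻¹(b+f). Then v and w induce the same ranking of indices: for all i, j, one has v_i < v_j if and only if w_i < w_j. -/

import Mathlib

open Matrix BigOperators

/-- Euclidean norm of a real vector. -/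
noncomputable def euclNorm {ι : Type*} [Fintype ι] (v : ι → ℝ) : ℝ := Real.sqrt (v ⬝ᵥ v)

/-- The spectral (ℓ²-operator) norm of a real square matrix. -/
noncomputable def specNorm {n : ℕ} (M : Matrix (Fin n) (Fin n) ℝ) : ℝ :=
  ‖Matrix.toEuclideanCLM (𝕜 := ℝ) M‖


lemma euclNorm_eq_norm {n : ℕ} (x : Fin n → ℝ) :
    euclNorm x = ‖((WithLp.equiv 2 (Fin n → ℝ)).symm x : EuclideanSpace ℝ (Fin n))‖ := by
  rw [euclNorm, EuclideanSpace.norm_eq]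
  congr 1
  simp [dotProduct, Real.norm_eq_abs, sq_abs, sq]

lemma euclNorm_nonneg {n : ℕ} (x : Fin n → ℝ) : 0 ≤ euclNorm x := Real.sqrt_nonneg _

lemma euclNorm_mulVec_le {n : ℕ} (M : Matrix (Fin n) (Fin n) ℝ) (x : Fin n → ℝ) :
    euclNorm (M *ᵥ x) ≤ specNorm M * euclNorm x := by
  rw [euclNorm_eq_norm, euclNorm_eq_norm, specNorm]
  have := (Matrix.toEuclideanCLM (𝕜 := ℝ) M).le_opNorm ((WithLp.equiv 2 (Fin n → ℝ)).symm x)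
  rwa [WithLp.equiv_symm_apply, Matrix.toEuclideanCLM_toLp] at this

lemma euclNorm_sub_le {n : ℕ} (x y : Fin n → ℝ) :
    euclNorm (x - y) ≤ euclNorm x + euclNorm y := by
  simp only [euclNorm_eq_norm]
  rw [show (WithLp.equiv 2 (Fin n → ℝ)).symm (x - y)
      = (WithLp.equiv 2 (Fin n → ℝ)).symm x - (WithLp.equiv 2 (Fin n → ℝ)).symm y from rfl]
  exact norm_sub_le _ _

lemma abs_dotProduct_le {n : ℕ} (x y : Fin n → ℝ) :
    |x ⬝ᵥ y| ≤ euclNorm x * euclNorm y := by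
  simp only [euclNorm_eq_norm]
  have := abs_real_inner_le_norm ((WithLp.equiv 2 (Fin n → ℝ)).symm x)
    ((WithLp.equiv 2 (Fin n → ℝ)).symm y)
  rwa [show (inner ℝ ((WithLp.equiv 2 (Fin n → ℝ)).symm x : EuclideanSpace ℝ (Fin n))
      ((WithLp.equiv 2 (Fin n → ℝ)).symm y) : ℝ) = x ⬝ᵥ y by
    rw [PiLp.inner_apply]; simp [dotProduct, mul_comm]] at this

lemma abs_apply_le_euclNorm {n : ℕ} (x : Fin n → ℝ) (i : Fin n) : |x i| ≤ euclNorm x := by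
  rw [euclNorm, ← Real.sqrt_sq_eq_abs]
  apply Real.sqrt_le_sqrt
  have h : x i ^ 2 ≤ ∑ j, x j * x j := by
    rw [sq]
    exact Finset.single_le_sum (f := fun j => x j * x j)
      (fun j _ => mul_self_nonneg _) (Finset.mem_univ i)
  simpa [dotProduct] using h

lemma sub_smul_one_mulVec {n : ℕ} (A : Matrix (Fin n) (Fin n) ℝ) (c : ℝ) (u : Fin n → ℝ) :
    (A - c • 1) *ᵥ u = A *ᵥ u - c • u := by
  rw [Matrix.sub_mulVec, Matrix.smul_mulVec, Matrix.one_mulVec]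

lemma quad_lower {n : ℕ} (A : Matrix (Fin n) (Fin n) ℝ) (hA : A.IsHermitian)
    (lam1 : ℝ)
    (hlam1 : ∀ μ ∈ {μ : ℝ | ∃ u : Fin n → ℝ, u ≠ 0 ∧ A *ᵥ u = μ • u}, lam1 ≤ μ)
    (x : Fin n → ℝ) : lam1 * (x ⬝ᵥ x) ≤ x ⬝ᵥ (A *ᵥ x) := by
  have hB : (A - lam1 • 1).IsHermitian := by
    simpa [Matrix.IsHermitian, Matrix.conjTranspose_sub] using hA.eq
  have heig : ∀ i, 0 ≤ hB.eigenvalues i := by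
    intro i
    have hu := hB.mulVec_eigenvectorBasis i
    set u : Fin n → ℝ := ⇑(hB.eigenvectorBasis i) with hudef
    have hune : u ≠ 0 := by
      intro h
      have h1 := hB.eigenvectorBasis.orthonormal.1 i
      have : (hB.eigenvectorBasis i) = 0 := WithLp.ofLp_injective 2 h
      rw [this] at h1
      simp at h1
    have h2 : A *ᵥ u - lam1 • u = hB.eigenvalues i • u := by
      rw [← sub_smul_one_mulVec]; exact hu
    have hAu : A *ᵥ u = (hB.eigenvalues i + lam1) • u := by
      rw [add_smul]; exact sub_eq_iff_eq_add.mp h2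
    have := hlam1 _ ⟨u, hune, hAu⟩
    linarith
  have hps : (A - lam1 • 1).PosSemidef := (Matrix.IsHermitian.posSemidef_iff_eigenvalues_nonneg hB).mpr heig
  have h3 := hps.dotProduct_mulVec_nonneg x
  rw [sub_smul_one_mulVec] at h3
  simp only [star_trivial, dotProduct_sub, dotProduct_smul, smul_eq_mul] at h3
  linarith

lemma dp_self_nonneg {n : ℕ} (x : Fin n → ℝ) : 0 ≤ x ⬝ᵥ x :=
  Finset.sum_nonneg fun i _ => mul_self_nonneg _

lemma euclNorm_sq {n : ℕ} (x : Fin n → ℝ) : euclNorm x ^ 2 = x ⬝ᵥ x :=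
  Real.sq_sqrt (dp_self_nonneg x)

lemma dp_self_pos {n : ℕ} {x : Fin n → ℝ} (hx : x ≠ 0) : 0 < x ⬝ᵥ x := by
  rcases (dp_self_nonneg x).lt_or_eq with h | h
  · exact h
  · exfalso; apply hx
    funext i
    by_contra hi
    have h1 : x i * x i ≤ ∑ j, x j * x j :=
      Finset.single_le_sum (f := fun j => x j * x j) (fun j _ => mul_self_nonneg _)
        (Finset.mem_univ i)
    have h2 : 0 < x i * x i := mul_self_pos.mpr hi
    have : (0:ℝ) < x ⬝ᵥ x := lt_of_lt_of_le h2 h1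
    linarith
    
/-- Let `A` be symmetric positive definite with smallest eigenvalue
`λ₁ > 0` and `v = A⁻¹ b` have pairwise distinct entries with gap
`g = min_{i ≠ j} |v i - v j| > 0`. If `E` is symmetric with `‖E‖₂ ≤ λ₁ / 2` and
`(2/λ₁²) ‖E‖₂ ‖b‖₂ + (2/λ₁) ‖f‖₂ < g / 2`, then `w = (A+E)⁻¹ (b+f)` induces the same
ranking of indices as `v`. -/
theorem ranking_stable_of_linear_system_perturbation (n : ℕ) (hn : 2 ≤ n)
    (A : Matrix (Fin n) (Fin n) ℝ) (hA : A.IsSymm) (hpd : A.PosDef)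
    (lam1 : ℝ) (hlam1pos : 0 < lam1)
    (hlam1 : IsLeast {μ : ℝ | ∃ u : Fin n → ℝ, u ≠ 0 ∧ A *ᵥ u = μ • u} lam1)
    (b : Fin n → ℝ) (v : Fin n → ℝ) (hv : v = A⁻¹ *ᵥ b)
    (g : ℝ) (hgpos : 0 < g)
    (hg : IsLeast {d : ℝ | ∃ i j : Fin n, i ≠ j ∧ d = |v i - v j|} g)
    (E : Matrix (Fin n) (Fin n) ℝ) (hE : E.IsSymm) (hEnorm : specNorm E ≤ lam1 / 2)
    (f : Fin n → ℝ)
    (hsmall : (2 / lam1 ^ 2) * specNorm E * euclNorm b + (2 / lam1) * euclNorm f < g / 2)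
    (w : Fin n → ℝ) (hw : w = (A + E)⁻¹ *ᵥ (b + f)) :
    ∀ i j, v i < v j ↔ w i < w j := by
  have hAH : A.IsHermitian := hpd.1
  have hEH : E.IsHermitian := by simpa [Matrix.IsHermitian] using hE.eq
  have hEnn : (0:ℝ) ≤ specNorm E := norm_nonneg _
  have hlow := quad_lower A hAH lam1 hlam1.2
  -- quadratic lower bound for A + E
  have hlow' : ∀ x : Fin n → ℝ, (lam1 / 2) * (x ⬝ᵥ x) ≤ x ⬝ᵥ ((A + E) *ᵥ x) := by
    intro x
    have h1 := hlow x
    have h2 := abs_dotProduct_le x (E *ᵥ x)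
    have h3 := euclNorm_mulVec_le E x
    have hxnn := euclNorm_nonneg x
    have hq := euclNorm_sq x
    have h4 : -(x ⬝ᵥ (E *ᵥ x)) ≤ (lam1/2) * (x ⬝ᵥ x) := by
      have : euclNorm x * euclNorm (E *ᵥ x) ≤ (lam1/2) * (x ⬝ᵥ x) := by
        rw [← hq]; nlinarith [euclNorm_nonneg (E *ᵥ x)]
      nlinarith [neg_abs_le (x ⬝ᵥ (E *ᵥ x))]
    rw [Matrix.add_mulVec, dotProduct_add]
    linarith
  -- A + E is positive definite
  have hpd' : (A + E).PosDef := by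
    refine Matrix.PosDef.of_dotProduct_mulVec_pos (hAH.add hEH) fun x hx => ?_
    have := hlow' x
    have hxx := dp_self_pos hx
    simp only [star_trivial]
    nlinarith
  -- solve the linear systems
  have hAv : A *ᵥ v = b := by
    rw [hv, Matrix.mulVec_mulVec, Matrix.mul_nonsing_inv _ hpd.det_pos.ne'.isUnit,
      Matrix.one_mulVec]
  have hAEw : (A + E) *ᵥ w = b + f := by
    rw [hw, Matrix.mulVec_mulVec, Matrix.mul_nonsing_inv _ hpd'.det_pos.ne'.isUnit,
      Matrix.one_mulVec]
  have hkey : (A + E) *ᵥ (w - v) = f - E *ᵥ v := by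
    rw [Matrix.mulVec_sub, hAEw, Matrix.add_mulVec, hAv]
    abel
  -- bound on ‖v‖
  have hvb : lam1 * euclNorm v ≤ euclNorm b := by
    have h1 := hlow v
    rw [hAv] at h1
    have h2 := (abs_dotProduct_le v b)
    have h3 := le_abs_self (v ⬝ᵥ b)
    have hq := euclNorm_sq v
    rcases (euclNorm_nonneg v).lt_or_eq with hpos | hzero
    · nlinarith [euclNorm_nonneg b]
    · rw [← hzero]; simpa using euclNorm_nonneg b
  -- bound on ‖w - v‖
  have hdb : (lam1 / 2) * euclNorm (w - v) ≤ euclNorm (f - E *ᵥ v) := by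
    have h1 := hlow' (w - v)
    rw [hkey] at h1
    have h2 := abs_dotProduct_le (w - v) (f - E *ᵥ v)
    have h3 := le_abs_self ((w - v) ⬝ᵥ (f - E *ᵥ v))
    have hq := euclNorm_sq (w - v)
    rcases (euclNorm_nonneg (w - v)).lt_or_eq with hpos | hzero
    · nlinarith [euclNorm_nonneg (f - E *ᵥ v)]
    · rw [← hzero]; simpa using euclNorm_nonneg (f - E *ᵥ v)
  have hfEv : euclNorm (f - E *ᵥ v) ≤ euclNorm f + specNorm E * euclNorm v :=
    le_trans (euclNorm_sub_le f (E *ᵥ v)) (by linarith [euclNorm_mulVec_le E v])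
  -- combine: euclNorm (w - v) < g / 2
  have hd : euclNorm (w - v) < g / 2 := by
    have hl2 : (0:ℝ) < lam1 ^ 2 := by positivity
    have hX : (2 / lam1 ^ 2) * specNorm E * euclNorm b + (2 / lam1) * euclNorm f
        = (2 * (specNorm E * euclNorm b) + 2 * lam1 * euclNorm f) / lam1 ^ 2 := by
      field_simp
    rw [hX, div_lt_iff₀ hl2] at hsmall
    have hkey2 : lam1 ^ 2 * euclNorm (w - v)
        ≤ 2 * (specNorm E * euclNorm b) + 2 * lam1 * euclNorm f := by
      nlinarith [euclNorm_nonneg v, euclNorm_nonneg (w - v)]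
    have := lt_of_le_of_lt hkey2 hsmall
    nlinarith
  have hcomp : ∀ k, |w k - v k| < g / 2 := fun k =>
    lt_of_le_of_lt (by simpa using abs_apply_le_euclNorm (w - v) k) hd
  have main : ∀ i j : Fin n, i ≠ j → v i < v j → w i < w j := by
    intro i j hij hlt
    have hg1 : g ≤ |v i - v j| := hg.2 ⟨i, j, hij, rfl⟩
    rw [abs_of_neg (by linarith)] at hg1
    have h1 := abs_lt.mp (hcomp i)
    have h2 := abs_lt.mp (hcomp j)
    linarith [h1.1, h1.2, h2.1, h2.2]
  intro i j
  by_cases hij : i = j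
  · subst hij; simp
  · have hg1 : g ≤ |v i - v j| := hg.2 ⟨i, j, hij, rfl⟩
    have hne : v i ≠ v j := by
      intro h; rw [h] at hg1; simp at hg1; linarith
    constructor
    · exact main i j hij
    · intro hwlt
      rcases lt_or_gt_of_ne hne with h | h
      · exact h
      · exact absurd hwlt (lt_asymm (main j i (Ne.symm hij) h))
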